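/- Assume α > 2 and that w_s and w_g are nonincreasing and continuous on [0, π] with values in [0, 1] and w_s(0)·w_g(0) > 0. Then the aggregate interference-to-noise ratio of the regular configuration diverges in the high-density limit: η(Δ) → ∞ as Δ → 0⁺. -/

import Mathlib

open Real

/-- Distance `‖s_{i,j}‖ = sqrt((iΔ/2)² + 3(jΔ/2)² + h²)` from the origin terminal to
satellite `s_{i,j}` of the regular configuration. -/
noncomputable def snorm (Δ h : ℝ) (i j : ℤ) : ℝ :=
  Real.sqrt ((i * Δ / 2) ^ 2 + 3 * (j * Δ / 2) ^ 2 + h ^ 2)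

/-- Off-axis angle `θ^reg_{i,j}(Δ) = arccos(h/‖s_{i,j}‖)`. -/
noncomputable def θreg (Δ h : ℝ) (i j : ℤ) : ℝ :=
  Real.arccos (h / snorm Δ h i j)

/-- Aggregate interference-to-noise ratio `η(Δ)` of the regular configuration. -/
noncomputable def ηreg (ws wg : ℝ → ℝ) (h α p σ2 : ℝ) (Δ : ℝ) : ℝ :=
  (p / σ2) * ∑' q : ℤ × ℤ,
    if q.1 % 2 = q.2 % 2 ∧ q ≠ (0, 0) then
      snorm Δ h q.1 q.2 ^ (-α) * (ws (θreg Δ h q.1 q.2) * wg (θreg Δ h q.1 q.2))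
    else 0

/-- Spectral efficiency of the regular configuration,
`R^reg(Δ) = (2/(Δ²√3))·log₂(1 + γ/(η(Δ) + 1))` with `γ = (p/σ²)h^{−α}`. -/
noncomputable def Rreg (ws wg : ℝ → ℝ) (h α p σ2 : ℝ) (Δ : ℝ) : ℝ :=
  (2 / (Δ ^ 2 * Real.sqrt 3)) *
    Real.logb 2 (1 + (p / σ2) * h ^ (-α) / (ηreg ws wg h α p σ2 Δ + 1))

/-!
As `Δ → 0⁺` every satellite tends to the zenith of the origin terminal, so each interference
term tends to `h^{-α} w_s(0) w_g(0) > 0`; with infinitely many interferers these limits are not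
summable. For each fixed `Δ > 0` the series does converge, by comparison with the convergent
series `∑_{q ∈ ℤ²} ‖q‖^{-α}`, `α > 2`, so a Fatou-type argument applies: a finite partial sum
of the limits exceeds any bound, and the same partial sum of `η(Δ)` does so for small `Δ`.
-/

open Filter Topology

theorem not_summable_ite_const {ι E : Type*} [AddCommGroup E] [TopologicalSpace E]
    [IsTopologicalAddGroup E] [T1Space E] {P : ι → Prop} [DecidablePred P] {c : E}
    (hP : {i | P i}.Infinite) (hc : c ≠ 0) : ¬Summable fun i => if P i then c else 0 := by
  intro hsum
  have hne := hsum.tendsto_cofinite_zero.eventually_ne hc.symm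
  rw [eventually_cofinite] at hne
  exact hP (hne.subset fun i hi => not_not_intro (if_pos hi))

theorem tendsto_tsum_atTop_of_not_summable {ι α : Type*} {l : Filter α} {F : α → ι → ℝ}
    {g : ι → ℝ} (hF : ∀ᶠ a in l, 0 ≤ F a ∧ Summable (F a))
    (hFg : ∀ i, Tendsto (F · i) l (𝓝 (g i))) (hg0 : 0 ≤ g) (hg : ¬Summable g) :
    Tendsto (fun a => ∑' i, F a i) l atTop := by
  rw [tendsto_atTop]
  intro M
  obtain ⟨s, hs⟩ : ∃ s : Finset ι, M < ∑ i ∈ s, g i := by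
    by_contra! H
    exact hg (summable_of_sum_le hg0 H)
  have hlim : Tendsto (fun a => ∑ i ∈ s, F a i) l (𝓝 (∑ i ∈ s, g i)) :=
    tendsto_finsetSum s fun i _ => hFg i
  filter_upwards [hF, hlim.eventually (eventually_ge_nhds hs)] with a ⟨hF0, hFsum⟩ hMs
  exact hMs.trans (hFsum.sum_le_tsum s fun i _ => hF0 i)

theorem summable_norm_rpow_neg_int_prod {α : ℝ} (hα : 2 < α) :
    Summable fun q : ℤ × ℤ => ‖q‖ ^ (-α) := by
  have hnorm (q : ℤ × ℤ) : ‖(finTwoArrowEquiv ℤ).symm q‖ = ‖q‖ := by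
    simp [EisensteinSeries.norm_eq_max_natAbs, Prod.norm_def, Int.norm_eq_abs, Nat.cast_natAbs]
  simpa only [Function.comp_def, hnorm] using
    (finTwoArrowEquiv ℤ).symm.summable_iff.mpr (EisensteinSeries.summable_one_div_norm_rpow hα)

theorem le_snorm (Δ h : ℝ) (i j : ℤ) : h ≤ snorm Δ h i j :=
  Real.le_sqrt_of_sq_le <| by
    nlinarith [sq_nonneg ((i : ℝ) * Δ / 2), sq_nonneg ((j : ℝ) * Δ / 2)]

theorem snorm_pos {h : ℝ} (hh : 0 < h) (Δ : ℝ) (i j : ℤ) : 0 < snorm Δ h i j :=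
  hh.trans_le (le_snorm Δ h i j)

theorem snorm_zero {h : ℝ} (hh : 0 ≤ h) (i j : ℤ) : snorm 0 h i j = h := by
  simp [snorm, Real.sqrt_sq hh]

theorem half_mul_norm_le_snorm (Δ h : ℝ) (i j : ℤ) :
    Δ / 2 * ‖(i, j)‖ ≤ snorm Δ h i j := by
  refine Real.le_sqrt_of_sq_le ?_
  rw [Prod.norm_def, Int.norm_eq_abs, Int.norm_eq_abs]
  rcases max_cases |(i : ℝ)| |(j : ℝ)| with ⟨hmax, -⟩ | ⟨hmax, -⟩ <;>
    rw [hmax, mul_pow, sq_abs] <;>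
    nlinarith [sq_nonneg ((i : ℝ) * Δ / 2), sq_nonneg ((j : ℝ) * Δ / 2), sq_nonneg h]

theorem θreg_mem_Icc (Δ h : ℝ) (i j : ℤ) : θreg Δ h i j ∈ Set.Icc 0 π :=
  ⟨Real.arccos_nonneg _, Real.arccos_le_pi _⟩

theorem continuous_snorm (h : ℝ) (i j : ℤ) : Continuous fun Δ => snorm Δ h i j := by
  unfold snorm
  fun_prop

theorem tendsto_snorm_zero {h : ℝ} (hh : 0 ≤ h) (i j : ℤ) :
    Tendsto (fun Δ => snorm Δ h i j) (𝓝 0) (𝓝 h) :=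
  (continuous_snorm h i j).tendsto' 0 h (snorm_zero hh i j)

theorem tendsto_θreg_zero {h : ℝ} (hh : 0 < h) (i j : ℤ) :
    Tendsto (fun Δ => θreg Δ h i j) (𝓝 0) (𝓝[Set.Icc 0 π] 0) := by
  have hcont : Continuous fun Δ => θreg Δ h i j :=
    Real.continuous_arccos.comp <|
      continuous_const.div (continuous_snorm h i j) fun Δ => (snorm_pos hh Δ i j).ne'
  refine tendsto_nhdsWithin_iff.mpr ⟨hcont.tendsto' 0 0 ?_, .of_forall (θreg_mem_Icc · h i j)⟩
  simp [θreg, snorm_zero hh.le, div_self hh.ne']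

noncomputable def ηterm (ws wg : ℝ → ℝ) (h α Δ : ℝ) (q : ℤ × ℤ) : ℝ :=
  if q.1 % 2 = q.2 % 2 ∧ q ≠ (0, 0) then
    snorm Δ h q.1 q.2 ^ (-α) * (ws (θreg Δ h q.1 q.2) * wg (θreg Δ h q.1 q.2))
  else 0

theorem ηreg_eq_mul_tsum_ηterm (ws wg : ℝ → ℝ) (h α p σ2 Δ : ℝ) :
    ηreg ws wg h α p σ2 Δ = p / σ2 * ∑' q, ηterm ws wg h α Δ q :=
  rfl

theorem infinite_setOf_sameParity_ne_zero :
    {q : ℤ × ℤ | q.1 % 2 = q.2 % 2 ∧ q ≠ (0, 0)}.Infinite := by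
  refine Set.infinite_of_injective_forall_mem (f := fun n : ℕ => ((2 * n + 2 : ℤ), (0 : ℤ)))
    (fun m n hmn => by simp only [Prod.mk.injEq] at hmn; omega) fun n => ?_
  simp only [Set.mem_ofPred_eq, ne_eq, Prod.mk.injEq]
  omega

section Weights

variable {ws wg : ℝ → ℝ}
  (hws : ∀ θ ∈ Set.Icc (0 : ℝ) π, ws θ ∈ Set.Icc (0 : ℝ) 1)
  (hwg : ∀ θ ∈ Set.Icc (0 : ℝ) π, wg θ ∈ Set.Icc (0 : ℝ) 1)
include hws hwg

theorem ηterm_nonneg (h α Δ : ℝ) (q : ℤ × ℤ) : 0 ≤ ηterm ws wg h α Δ q := by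
  have hθ := θreg_mem_Icc Δ h q.1 q.2
  unfold ηterm
  split_ifs
  · exact mul_nonneg (Real.rpow_nonneg (Real.sqrt_nonneg _) _)
      (mul_nonneg (hws _ hθ).1 (hwg _ hθ).1)
  · exact le_rfl

theorem ηterm_le {h α Δ : ℝ} (hα : 0 ≤ α) (hΔ : 0 < Δ) (q : ℤ × ℤ) :
    ηterm ws wg h α Δ q ≤ (Δ / 2) ^ (-α) * ‖q‖ ^ (-α) := by
  have hθ := θreg_mem_Icc Δ h q.1 q.2
  unfold ηterm
  split_ifs with hq
  · have hq0 : 0 < ‖q‖ := norm_pos_iff.mpr hq.2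
    calc snorm Δ h q.1 q.2 ^ (-α) * (ws (θreg Δ h q.1 q.2) * wg (θreg Δ h q.1 q.2))
        ≤ snorm Δ h q.1 q.2 ^ (-α) :=
          mul_le_of_le_one_right (Real.rpow_nonneg (Real.sqrt_nonneg _) _)
            (mul_le_one₀ (hws _ hθ).2 (hwg _ hθ).1 (hwg _ hθ).2)
      _ ≤ (Δ / 2 * ‖q‖) ^ (-α) :=
          Real.rpow_le_rpow_of_nonpos (by positivity) (half_mul_norm_le_snorm Δ h q.1 q.2)
            (neg_nonpos.mpr hα)
      _ = (Δ / 2) ^ (-α) * ‖q‖ ^ (-α) := Real.mul_rpow (by positivity) hq0.le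
  · positivity

theorem summable_ηterm {h α Δ : ℝ} (hα : 2 < α) (hΔ : 0 < Δ) :
    Summable (ηterm ws wg h α Δ) :=
  .of_nonneg_of_le (ηterm_nonneg hws hwg h α Δ) (ηterm_le hws hwg (by linarith) hΔ)
    ((summable_norm_rpow_neg_int_prod hα).mul_left _)

end Weights

theorem tendsto_ηterm_zero {ws wg : ℝ → ℝ} {h : ℝ} (hh : 0 < h)
    (hws : ContinuousWithinAt ws (Set.Icc 0 π) 0) (hwg : ContinuousWithinAt wg (Set.Icc 0 π) 0)
    (α : ℝ) (q : ℤ × ℤ) :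
    Tendsto (fun Δ => ηterm ws wg h α Δ q) (𝓝 0)
      (𝓝 (if q.1 % 2 = q.2 % 2 ∧ q ≠ (0, 0) then h ^ (-α) * (ws 0 * wg 0) else 0)) := by
  unfold ηterm
  split_ifs
  · have hθ := tendsto_θreg_zero hh q.1 q.2
    exact ((tendsto_snorm_zero hh.le q.1 q.2).rpow_const (.inl hh.ne')).mul
      ((hws.tendsto.comp hθ).mul (hwg.tendsto.comp hθ))
  · exact tendsto_const_nhds

theorem eta_tendsto_atTop_general
    (ws wg : ℝ → ℝ) (h α p σ2 : ℝ)
    (hh : 0 < h) (hα : 2 < α) (hp : 0 < p) (hσ : 0 < σ2)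
    (hws_cont : ContinuousOn ws (Set.Icc (0 : ℝ) π))
    (hwg_cont : ContinuousOn wg (Set.Icc (0 : ℝ) π))
    (hws_mem : ∀ θ ∈ Set.Icc (0 : ℝ) π, ws θ ∈ Set.Icc (0 : ℝ) 1)
    (hwg_mem : ∀ θ ∈ Set.Icc (0 : ℝ) π, wg θ ∈ Set.Icc (0 : ℝ) 1)
    (hpos : 0 < ws 0 * wg 0) :
    Filter.Tendsto (ηreg ws wg h α p σ2) (nhdsWithin 0 (Set.Ioi 0)) Filter.atTop := by
  have h0 : (0 : ℝ) ∈ Set.Icc 0 π := ⟨le_rfl, Real.pi_pos.le⟩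
  have hc : 0 < h ^ (-α) * (ws 0 * wg 0) := mul_pos (Real.rpow_pos_of_pos hh _) hpos
  have hsum : Tendsto (fun Δ => ∑' q, ηterm ws wg h α Δ q) (𝓝[>] 0) atTop := by
    refine tendsto_tsum_atTop_of_not_summable ?_
      (fun q => (tendsto_ηterm_zero hh (hws_cont 0 h0) (hwg_cont 0 h0) α q).mono_left
        nhdsWithin_le_nhds)
      (fun q => by dsimp only; split_ifs <;> positivity)
      (not_summable_ite_const infinite_setOf_sameParity_ne_zero hc.ne')
    filter_upwards [self_mem_nhdsWithin] with Δ hΔ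
    exact ⟨ηterm_nonneg hws_mem hwg_mem h α Δ, summable_ηterm hws_mem hwg_mem hα hΔ⟩
  simpa only [← ηreg_eq_mul_tsum_ηterm] using hsum.const_mul_atTop (div_pos hp hσ)

/-- The aggregate interference-to-noise ratio of the regular configuration diverges in
the high-density limit: `η(Δ) → ∞` as `Δ → 0⁺`. -/
theorem eta_tendsto_atTop
    (ws wg : ℝ → ℝ) (h α p σ2 : ℝ)
    (hh : 0 < h) (hα : 2 < α) (hp : 0 < p) (hσ : 0 < σ2)
    (hws_anti : AntitoneOn ws (Set.Icc (0 : ℝ) π))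
    (hwg_anti : AntitoneOn wg (Set.Icc (0 : ℝ) π))
    (hws_cont : ContinuousOn ws (Set.Icc (0 : ℝ) π))
    (hwg_cont : ContinuousOn wg (Set.Icc (0 : ℝ) π))
    (hws_mem : ∀ θ ∈ Set.Icc (0 : ℝ) π, ws θ ∈ Set.Icc (0 : ℝ) 1)
    (hwg_mem : ∀ θ ∈ Set.Icc (0 : ℝ) π, wg θ ∈ Set.Icc (0 : ℝ) 1)
    (hpos : 0 < ws 0 * wg 0) :
    Filter.Tendsto (ηreg ws wg h α p σ2) (nhdsWithin 0 (Set.Ioi 0)) Filter.atTop :=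
  eta_tendsto_atTop_general ws wg h α p σ2 hh hα hp hσ hws_cont hwg_cont hws_mem hwg_mem hpos
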